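/- arXiv:1211.2723 — 2 statements merged into one kernel-verified Lean document; each statement's English description precedes it below -/
import Mathlib

section
/- Let C ∈ O_n and suppose R_n = S⁰ ⇒^{π_1} S¹ ⇒^{π_2} S² ⇒^{π_3} … ⇒^{π_m} Sᵐ = C with all Sⁱ ∈ S_n. Then this is a shortest ⇒-transformation from R_n to C if and only if, for every i ∈ {1,…,m}, π_i is a prefix of at least one codeword of C. -/
/-- A binary string is a `List Bool` (`false` = 0, `true` = 1).
A palindrome is a string equal to its own reversal. -/
def Palin (w : List Bool) : Prop := w.reverse = w

/-- A symmetric fix-free code: a finite set of binary palindromes in which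
no element is a proper prefix of another. -/
def IsSFF (C : Finset (List Bool)) : Prop :=
  (∀ w ∈ C, Palin w) ∧ ∀ u ∈ C, ∀ w ∈ C, u <+: w → u = w

/-- The sorted nondecreasing length sequence of a code. -/
def lenSeq (C : Finset (List Bool)) : List ℕ :=
  (C.val.map List.length).sort (· ≤ ·)

/-- The `i`-th entry (0-indexed) of the sorted length sequence. -/
def nthLen (C : Finset (List Bool)) (i : ℕ) : ℕ := (lenSeq C).getD i 0

/-- `p` is a probability vector with `p 0 ≥ p 1 ≥ ⋯ ≥ p (n-1) > 0`. -/
def IsProbVec (p : ℕ → ℝ) (n : ℕ) : Prop :=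
  (∀ i j, i < n → j < n → i ≤ j → p j ≤ p i) ∧ (∀ i < n, 0 < p i) ∧
    ∑ i ∈ Finset.range n, p i = 1

/-- Expected codeword length of `C` (via its sorted length sequence) under `p`. -/
noncomputable def expLen (p : ℕ → ℝ) (n : ℕ) (C : Finset (List Bool)) : ℝ :=
  ∑ i ∈ Finset.range n, p i * (nthLen C i : ℝ)

/-- `C` is an optimal symmetric fix-free code with `n` codewords: for some
nonincreasing probability vector, its expected length is minimal among all
symmetric fix-free codes with `n` codewords. -/
def IsOptimal (n : ℕ) (C : Finset (List Bool)) : Prop :=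
  IsSFF C ∧ C.card = n ∧ ∃ p : ℕ → ℝ, IsProbVec p n ∧
    ∀ C' : Finset (List Bool), IsSFF C' → C'.card = n →
      expLen p n C ≤ expLen p n C'

/-- Membership in `O_n`: optimal with `n` codewords and not containing the string `1`. -/
def InOpt (n : ℕ) (C : Finset (List Bool)) : Prop :=
  IsOptimal n C ∧ [true] ∉ C

/-- The root codeword `s i`: `s 1 = 0`, and `s i = 1 0^(i-2) 1` for `i ≥ 2`. -/
def rootWord (i : ℕ) : List Bool :=
  if i = 1 then [false] else true :: (List.replicate (i - 2) false ++ [true])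

/-- The root code `R_n = {s_1, …, s_n}`. -/
def rootCode (n : ℕ) : Finset (List Bool) :=
  (Finset.Icc 1 n).image rootWord

/-- `N(σ)`: palindromes `w` such that `σ` is the longest palindrome that is a
proper prefix of `w`. -/
def Nbhd (σ : List Bool) : Set (List Bool) :=
  {w | Palin w ∧ Palin σ ∧ σ <+: w ∧ σ ≠ w ∧
    ∀ u, Palin u → u <+: w → u ≠ w → u.length ≤ σ.length}

/-- `N_n(σ) = {w ∈ N(σ) : |w| ≤ n}`. -/
def NbhdN (n : ℕ) (σ : List Bool) : Set (List Bool) :=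
  {w | w ∈ Nbhd σ ∧ w.length ≤ n}

/-- `S_n`: symmetric fix-free codes with `n` codewords, not containing `1`,
all of whose codewords have length at most `n`. -/
def SCodes (n : ℕ) : Set (Finset (List Bool)) :=
  {C | IsSFF C ∧ C.card = n ∧ [true] ∉ C ∧ ∀ w ∈ C, w.length ≤ n}

/-- The relation `S →^σ T`: `σ ∈ S` and `T ⊆ (S ∪ N_n(σ)) \ {σ}`. -/
def ArrowTo (n : ℕ) (σ : List Bool) (S T : Finset (List Bool)) : Prop :=
  σ ∈ S ∧ ∀ w ∈ T, (w ∈ S ∨ w ∈ NbhdN n σ) ∧ w ≠ σ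

/-- The relation `S ⇒^σ T`: `σ ∈ S`, `T ⊆ (S ∪ N_n(σ)) \ {σ}`, `|T| = n`, and
every omitted element of `(S ∪ N_n(σ)) \ {σ}` is at least as long as every
element of `T` (so `T` consists of `n` shortest words of `(S ∪ N_n(σ)) \ {σ}`). -/
def StepTo (n : ℕ) (σ : List Bool) (S T : Finset (List Bool)) : Prop :=
  ArrowTo n σ S T ∧ T.card = n ∧
  ∀ w : List Bool, (w ∈ S ∨ w ∈ NbhdN n σ) → w ≠ σ → w ∉ T →
    ∀ v ∈ T, v.length ≤ w.length

/-- A `⇒`-transformation `R_n = S⁰ ⇒ S¹ ⇒ ⋯ ⇒ Sᵐ = C` of codes in `S_n`. -/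
def IsTransform (n m : ℕ) (S : ℕ → Finset (List Bool)) (C : Finset (List Bool)) : Prop :=
  S 0 = rootCode n ∧ S m = C ∧ (∀ i ≤ m, S i ∈ SCodes n) ∧
  ∀ i < m, ∃ σ, StepTo n σ (S i) (S (i + 1))

/-- A `⇒`-transformation with the witness `π i` used for the step `S i ⇒ S (i+1)`
(so `π 0, …, π (m-1)` are `π_1, …, π_m`). -/
def IsTransformW (n m : ℕ) (S : ℕ → Finset (List Bool)) (π : ℕ → List Bool)
    (C : Finset (List Bool)) : Prop :=
  S 0 = rootCode n ∧ S m = C ∧ (∀ i ≤ m, S i ∈ SCodes n) ∧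
  ∀ i < m, StepTo n (π i) (S i) (S (i + 1))

/-- `C^prefix`: palindromes other than `1` that are proper prefixes of some codeword of `C`. -/
def prefixSet (C : Finset (List Bool)) : Set (List Bool) :=
  {u | Palin u ∧ u ≠ [true] ∧ ∃ w ∈ C, u <+: w ∧ u ≠ w}

/-- Maximum codeword length of a code. -/
def maxLen (C : Finset (List Bool)) : ℕ := C.sup List.length

/-- Bitwise complement of a binary string. -/
def bcomp (w : List Bool) : List Bool := w.map (fun b => !b)

/-- `Dominates n l l'`: the sorted nondecreasing sequence `l` dominates `l'`,
i.e. `Σ_{j=1}^i l'_j ≥ Σ_{j=1}^i l_j` for every `i ∈ {1,…,n}`. -/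
def Dominates (n : ℕ) (l l' : ℕ → ℕ) : Prop :=
  ∀ i ≤ n, ∑ j ∈ Finset.range i, l j ≤ ∑ j ∈ Finset.range i, l' j

/-- Membership in `D_n`: codes in `S_n` whose length sequence is not dominated by
the length sequence of any code in `S_n` having a different length sequence. -/
def InD (n : ℕ) (S : Finset (List Bool)) : Prop :=
  S ∈ SCodes n ∧ ∀ C ∈ SCodes n, lenSeq C ≠ lenSeq S →
    ¬ Dominates n (nthLen C) (nthLen S)

/-!
At every time `t` of a transformation `R_n = S⁰ ⇒^{π_1} S¹ ⇒ ⋯`, each word of `Sᵗ` is nonempty,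
differs from the words expanded so far, and all its palindromic proper prefixes other than `ε`
and `1` have been expanded: a word entering at step `t` is a child of `π_t`, so its palindromic
proper prefixes are `π_t` and the prefixes of `π_t`. Consequently the `π_i` are distinct, none of
them is a codeword of `C`, and every nontrivial palindromic proper prefix of a codeword of `C`
is some `π_i`. Every transformation to `C` therefore has at least `|palPrefixes C|` steps, with
equality exactly when each `π_i` is a prefix of a codeword.

For optimal `C` the bound is attained: expand the elements of `palPrefixes C` by increasing
length and keep, at each stage, the `n` shortest available words, preferring codewords of `C` and
their prefixes. By optimality no other available word is shorter than the longest codeword, since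
it could replace it, so the preferred words are always kept and the last stage is `C`.
-/

open Finset

theorem List.IsPrefix.length_lt_of_ne {α : Type*} {l₁ l₂ : List α} (h : l₁ <+: l₂)
    (hne : l₁ ≠ l₂) : l₁.length < l₂.length :=
  h.length_le.lt_of_ne fun e => hne (h.eq_of_length e)

theorem List.Pairwise.getElem_le_iff_lt_countP {l : List ℕ} (hs : l.Pairwise (· ≤ ·)) {i : ℕ}
    (hi : i < l.length) (j : ℕ) : l[i] ≤ j ↔ i < l.countP (· ≤ j) := by
  have mono : ∀ a b (ha : a < l.length) (hb : b < l.length), a ≤ b → l[a] ≤ l[b] :=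
    fun a b ha hb hab => hab.lt_or_eq.elim (List.pairwise_iff_getElem.1 hs a b ha hb)
      (fun h => by subst h; rfl)
  constructor
  · intro hij
    have htake : (l.take (i + 1)).countP (· ≤ j) = i + 1 := by
      rw [List.countP_eq_length.2, List.length_take, min_eq_left hi]
      intro a ha
      obtain ⟨k, hk, rfl⟩ := List.mem_take_iff_getElem.1 ha
      simpa using (mono k i _ hi (by omega)).trans hij
    have := (List.take_sublist (i + 1) l).countP_le (p := (· ≤ j))
    omega
  · intro hcount
    by_contra! hji
    have hdrop : (l.drop i).countP (· ≤ j) = 0 := by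
      rw [List.countP_eq_zero]
      intro a ha
      obtain ⟨k, hk, rfl⟩ := List.mem_iff_getElem.1 ha
      simp only [List.getElem_drop, decide_eq_true_eq, not_le]
      exact hji.trans_le (mono i (i + k) hi (by simp at hk; omega) (by omega))
    have htake := (l.take i).countP_le_length (p := (· ≤ j))
    rw [← List.take_append_drop i l, List.countP_append, hdrop] at hcount
    rw [List.length_take] at htake
    omega

theorem Finset.card_le_card_of_insert_erase_subset {α : Type*} [DecidableEq α]
    {s t : Finset α} {a b : α} (hb : b ∉ s.erase a) (h : insert b (s.erase a) ⊆ t) :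
    s.card ≤ t.card := by
  have h1 := card_le_card h
  rw [card_insert_of_notMem hb] at h1
  have h2 := pred_card_le_card_erase (s := s) (a := a)
  omega

section Lowest

variable {α β : Type*} [LinearOrder β] (f : α → β)

noncomputable def rank (B : Finset α) (x : α) : ℕ := (B.filter fun y => f y < f x).card

noncomputable def lowest (n : ℕ) (B : Finset α) : Finset α := B.filter fun x => rank f B x < n

variable {f} {B : Finset α} {x y : α}

theorem rank_lt_card (hx : x ∈ B) : rank f B x < B.card :=
  card_lt_card (filter_ssubset.2 ⟨x, hx, lt_irrefl _⟩)

theorem filter_lt_subset (h : f x ≤ f y) :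
    B.filter (fun z => f z < f x) ⊆ B.filter (fun z => f z < f y) := fun _ hz =>
  mem_filter.2 ⟨(mem_filter.1 hz).1, (mem_filter.1 hz).2.trans_le h⟩

theorem rank_le_rank (h : f x ≤ f y) : rank f B x ≤ rank f B y :=
  card_le_card (filter_lt_subset h)

theorem rank_lt_rank (hx : x ∈ B) (h : f x < f y) : rank f B x < rank f B y :=
  card_lt_card ((ssubset_iff_of_subset (filter_lt_subset h.le)).2
    ⟨x, mem_filter.2 ⟨hx, h⟩, fun hx' => lt_irrefl _ (mem_filter.1 hx').2⟩)

theorem rank_injOn (hf : Set.InjOn f B) : Set.InjOn (rank f B) B := by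
  intro x hx y hy hxy
  refine hf hx hy (le_antisymm ?_ ?_) <;> refine le_of_not_gt fun h => ?_
  exacts [(rank_lt_rank hy h).ne' hxy, (rank_lt_rank hx h).ne hxy]

theorem exists_rank_eq (hf : Set.InjOn f B) {k : ℕ} (hk : k < B.card) :
    ∃ x ∈ B, rank f B x = k := by
  obtain ⟨x, hx, hkx⟩ := surj_on_of_inj_on_of_card_le (t := range B.card)
    (fun x _ => rank f B x) (fun x hx => mem_range.2 (rank_lt_card hx))
    (fun _ _ ha hb h => rank_injOn hf ha hb h) (card_range _).le k (mem_range.2 hk)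
  exact ⟨x, hx, hkx.symm⟩

theorem mem_lowest {n : ℕ} : x ∈ lowest f n B ↔ x ∈ B ∧ rank f B x < n := mem_filter

theorem lowest_subset {n : ℕ} : lowest f n B ⊆ B := filter_subset _ _

theorem lt_of_not_mem_lowest {n : ℕ} (hx : x ∈ B) (hxn : x ∉ lowest f n B)
    (hy : y ∈ lowest f n B) : f y < f x :=
  lt_of_not_ge fun h => hxn (mem_lowest.2 ⟨hx, (rank_le_rank h).trans_lt (mem_lowest.1 hy).2⟩)

theorem card_lowest (hf : Set.InjOn f B) (n : ℕ) : (lowest f n B).card = min n B.card := by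
  rw [← card_range (min n B.card)]
  refine card_bij (fun x _ => rank f B x) (fun x hx => ?_) (fun x hx y hy h => ?_) fun k hk => ?_
  · obtain ⟨hxB, hxn⟩ := mem_lowest.1 hx
    exact mem_range.2 (lt_min hxn (rank_lt_card hxB))
  · exact rank_injOn hf (lowest_subset hx) (lowest_subset hy) h
  · obtain ⟨hkn, hkB⟩ := lt_min_iff.1 (mem_range.1 hk)
    obtain ⟨x, hx, rfl⟩ := exists_rank_eq hf hkB
    exact ⟨x, mem_lowest.2 ⟨hx, hkn⟩, rfl⟩

theorem lowest_eq_self {n : ℕ} (h : B.card ≤ n) : lowest f n B = B :=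
  filter_true_of_mem fun _ hx => (rank_lt_card hx).trans_le h

end Lowest

instance : DecidablePred Palin := fun w => inferInstanceAs (Decidable (w.reverse = w))

section Development

variable {n m k t : ℕ} {u v w x y σ : List Bool} {C : Finset (List Bool)}
  {S : ℕ → Finset (List Bool)} {π : ℕ → List Bool}

theorem palin_true_cons_replicate_iff :
    Palin (true :: List.replicate k false) ↔ k = 0 := by
  refine ⟨fun h => ?_, by rintro rfl; rfl⟩
  rcases k with _ | k
  · rfl
  · have := congrArg List.head? h
    rw [List.reverse_cons, List.reverse_replicate, List.replicate_succ] at this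
    simp at this

theorem palin_one_zeros_one (k : ℕ) : Palin (true :: (List.replicate k false ++ [true])) := by
  simp [Palin, List.reverse_append, List.reverse_replicate]

theorem eq_replicate_or_exists_true (v : List Bool) :
    v = List.replicate v.length false ∨ ∃ k t, v = List.replicate k false ++ true :: t := by
  induction v with
  | nil => simp
  | cons b v ih =>
    cases b
    · rcases ih with h | ⟨k, t, h⟩
      · left
        rw [List.length_cons, List.replicate_succ, ← h]
      · exact Or.inr ⟨k + 1, t, by rw [h]; rfl⟩
    · exact Or.inr ⟨0, v, rfl⟩

/-! ### Root words -/

def IsRoot (w : List Bool) : Prop :=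
  w = [false] ∨ ∃ k, w = true :: (List.replicate k false ++ [true])

theorem IsRoot.palin (h : IsRoot w) : Palin w := by
  rcases h with rfl | ⟨k, rfl⟩
  · rfl
  · exact palin_one_zeros_one k

theorem IsRoot.ne_nil (h : IsRoot w) : w ≠ [] := by
  rcases h with rfl | ⟨k, rfl⟩ <;> simp

theorem IsRoot.ne_one (h : IsRoot w) : w ≠ [true] := by
  rcases h with rfl | ⟨k, rfl⟩ <;> simp

theorem IsRoot.eq_nil_or_eq_one (hw : IsRoot w) (hx : Palin x) (hpre : x <+: w) (hne : x ≠ w) :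
    x = [] ∨ x = [true] := by
  have hlt := hpre.length_lt_of_ne hne
  rw [List.prefix_iff_eq_take] at hpre
  rcases hx' : x.length with _ | i
  · exact Or.inl (List.eq_nil_of_length_eq_zero hx')
  rcases hw with rfl | ⟨k, rfl⟩
  · simp [hx'] at hlt
  · rw [hx'] at hpre hlt
    simp only [List.length_cons, List.length_append, List.length_replicate, List.length_nil]
      at hlt
    rw [List.take_succ_cons, List.take_append_of_le_length (by simp; omega),
      List.take_replicate, min_eq_left (by omega)] at hpre
    rw [hpre] at hx ⊢
    rw [palin_true_cons_replicate_iff.1 hx]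
    simp

theorem rootWord_eq_of_isRoot (hw : IsRoot w) : rootWord w.length = w := by
  rcases hw with rfl | ⟨k, rfl⟩
  · rfl
  · simp [rootWord]

theorem isRoot_rootWord (i : ℕ) : IsRoot (rootWord i) := by
  unfold rootWord
  split_ifs with h
  · exact Or.inl rfl
  · exact Or.inr ⟨i - 2, rfl⟩

theorem length_rootWord {i : ℕ} (hi : 1 ≤ i) : (rootWord i).length = i := by
  unfold rootWord
  split_ifs with h
  · simp [h]
  · simp; omega

theorem mem_rootCode : w ∈ rootCode n ↔ IsRoot w ∧ w.length ≤ n := by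
  constructor
  · rw [rootCode, mem_image]
    rintro ⟨i, hi, rfl⟩
    rw [mem_Icc] at hi
    exact ⟨isRoot_rootWord i, (length_rootWord hi.1).trans_le hi.2⟩
  · rintro ⟨hr, hlen⟩
    refine mem_image.2 ⟨w.length, mem_Icc.2 ⟨?_, hlen⟩, rootWord_eq_of_isRoot hr⟩
    exact List.length_pos_iff.2 hr.ne_nil

theorem card_rootCode (n : ℕ) : (rootCode n).card = n := by
  rw [rootCode, card_image_of_injOn, Nat.card_Icc, Nat.add_sub_cancel]
  intro i hi j hj hij
  rw [← length_rootWord (mem_Icc.1 hi).1, ← length_rootWord (mem_Icc.1 hj).1, hij]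

/-! ### Palindromic parents -/

theorem mem_nbhd_length_lt (hw : w ∈ Nbhd σ) : σ.length < w.length :=
  hw.2.2.1.length_lt_of_ne hw.2.2.2.1

theorem prefix_of_mem_nbhd (hw : w ∈ Nbhd σ) (hu : Palin u) (hpre : u <+: w) (hne : u ≠ w) :
    u <+: σ :=
  List.prefix_of_prefix_length_le hpre hw.2.2.1 (hw.2.2.2.2 u hu hpre hne)

theorem exists_mem_nbhd (hw : Palin w) (hne : w ≠ []) : ∃ σ, w ∈ Nbhd σ := by
  have hcand : (w.inits.toFinset.filter (fun x => Palin x ∧ x ≠ w)).Nonempty :=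
    ⟨[], mem_filter.2 ⟨List.mem_toFinset.2 ((List.mem_inits _ _).2 List.nil_prefix), rfl, hne.symm⟩⟩
  obtain ⟨σ, hσ, hmax⟩ := exists_max_image _ List.length hcand
  simp only [mem_filter, List.mem_toFinset, List.mem_inits] at hσ hmax
  exact ⟨σ, hw, hσ.2.1, hσ.1, hσ.2.2, fun x hx hpre hne => hmax x ⟨hpre, hx, hne⟩⟩

theorem exists_mem_nbhd_prefix (hu : Palin u) (hw : Palin w) (hpre : u <+: w) (hne : u ≠ w) :
    ∃ c ∈ Nbhd u, c <+: w := by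
  have hcand : (w.inits.toFinset.filter (fun c => Palin c ∧ u.length < c.length)).Nonempty :=
    ⟨w, by simpa using ⟨hw, hpre.length_lt_of_ne hne⟩⟩
  obtain ⟨c, hc, hmin⟩ := exists_min_image _ List.length hcand
  simp only [mem_filter, List.mem_toFinset, List.mem_inits] at hc hmin
  have huc : u <+: c := List.prefix_of_prefix_length_le hpre hc.1 hc.2.2.le
  refine ⟨c, ⟨hc.2.1, hu, huc, fun h => by simp [h] at hc, fun x hx hxc hne => ?_⟩, hc.1⟩
  by_contra! hlt
  have := hmin x ⟨hxc.trans hc.1, hx, hlt⟩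
  have := hxc.length_lt_of_ne hne
  omega

theorem isRoot_of_mem_nbhd (hw : w ∈ Nbhd σ) (hσ : σ = [] ∨ σ = [true]) (h1 : w ≠ [true]) :
    IsRoot w := by
  obtain ⟨hwp, -, hσw, hσne, hmax⟩ := hw
  have hσlen : σ.length ≤ 1 := by rcases hσ with rfl | rfl <;> simp
  rcases w with _ | ⟨b, v⟩
  · exact absurd (List.prefix_nil.1 hσw) hσne
  cases b
  · left
    by_contra hne
    have hpre : [false] <+: false :: v := ⟨v, rfl⟩
    have hle := hmax [false] rfl hpre (Ne.symm hne)
    have hσlen' : σ.length ≤ [false].length := by simpa using hσlen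
    have := (List.prefix_of_prefix_length_le hσw hpre hσlen').eq_of_length (le_antisymm hσlen' hle)
    rcases hσ with rfl | rfl <;> simp at this
  · rcases eq_replicate_or_exists_true v with h | ⟨k, t, rfl⟩
    · rw [h, palin_true_cons_replicate_iff] at hwp
      exact absurd (by rw [h, hwp]; rfl) h1
    · right
      refine ⟨k, ?_⟩
      by_contra hne
      have := hmax _ (palin_one_zeros_one k) ⟨t, by simp⟩ (Ne.symm hne)
      simp at this
      omega

/-! ### The invariant of a transformation -/

def palPrefixes (C : Finset (List Bool)) : Finset (List Bool) :=
  C.biUnion fun w => w.inits.toFinset.filter fun u => Palin u ∧ u ≠ [] ∧ u ≠ [true] ∧ u ≠ w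

theorem mem_palPrefixes :
    u ∈ palPrefixes C ↔ Palin u ∧ u ≠ [] ∧ u ≠ [true] ∧ ∃ w ∈ C, u <+: w ∧ u ≠ w := by
  simp only [palPrefixes, mem_biUnion, mem_filter, List.mem_toFinset, List.mem_inits]
  constructor
  · rintro ⟨w, hw, hpre, hu, h0, h1, hne⟩
    exact ⟨hu, h0, h1, w, hw, hpre, hne⟩
  · rintro ⟨hu, h0, h1, w, hw, hpre, hne⟩
    exact ⟨w, hw, hpre, hu, h0, h1, hne⟩

def Settled (π : ℕ → List Bool) (t : ℕ) (w : List Bool) : Prop :=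
  w ≠ [] ∧ (∀ i < t, π i ≠ w) ∧
    ∀ u, Palin u → u <+: w → u ≠ w → u ≠ [] → u ≠ [true] → ∃ i < t, π i = u

theorem IsRoot.settled (hw : IsRoot w) : Settled π 0 w := by
  refine ⟨hw.ne_nil, by simp, fun u hu hpre hne h0 h1 => ?_⟩
  rcases hw.eq_nil_or_eq_one hu hpre hne with h | h <;> contradiction

theorem Settled.succ (hw : Settled π t w) (hne : π t ≠ w) : Settled π (t + 1) w := by
  obtain ⟨h0, hfresh, hpref⟩ := hw
  refine ⟨h0, fun i hi => ?_, fun u hu hpre hne h0 h1 => ?_⟩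
  · rcases Nat.lt_succ_iff_lt_or_eq.1 hi with hi | rfl
    exacts [hfresh i hi, hne]
  · obtain ⟨i, hi, rfl⟩ := hpref u hu hpre hne h0 h1
    exact ⟨i, by omega, rfl⟩

/-- The expanded words are distinct: a repetition `π i = w` would make `π t`, a prefix of `π i`,
expanded twice. -/
theorem Settled.child (hσ : Settled π t (π t)) (hσ1 : π t ≠ [true])
    (hprev : ∀ i < t, Settled π i (π i)) (hw : w ∈ Nbhd (π t)) : Settled π (t + 1) w := by
  have hlt := mem_nbhd_length_lt hw
  refine ⟨fun h => by simp [h] at hlt, fun i hi hiw => ?_, fun u hu hpre hne h0 h1 => ?_⟩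
  · rcases Nat.lt_succ_iff_lt_or_eq.1 hi with hi | rfl
    · obtain ⟨l, hl, hlt⟩ := (hprev i hi).2.2 (π t) hw.2.1 (hiw ▸ hw.2.2.1)
        (hiw ▸ hw.2.2.2.1) hσ.1 hσ1
      exact hσ.2.1 l (by omega) hlt
    · exact hw.2.2.2.1 hiw
  · have hut := prefix_of_mem_nbhd hw hu hpre hne
    by_cases hut' : u = π t
    · exact ⟨t, by omega, hut'.symm⟩
    · obtain ⟨i, hi, rfl⟩ := hσ.2.2 u hu hut hut' h0 h1
      exact ⟨i, by omega, rfl⟩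

theorem IsTransformW.settled (hT : IsTransformW n m S π C) (ht : t ≤ m) :
    ∀ w ∈ S t, Settled π t w := by
  obtain ⟨hS0, -, hSC, hW⟩ := hT
  induction t using Nat.strong_induction_on with
  | _ t ih =>
    rcases t with _ | t
    · intro w hw
      rw [hS0, mem_rootCode] at hw
      exact hw.1.settled
    intro w hw
    obtain ⟨⟨hσ, hsub⟩, -⟩ := hW t (by omega)
    rcases (hsub w hw).1 with hold | hnew
    · exact (ih t (by omega) (by omega) w hold).succ (hsub w hw).2.symm
    · exact Settled.child (ih t (by omega) (by omega) _ hσ)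
        (fun h => (hSC t (by omega)).2.2.1 (h ▸ hσ))
        (fun i hi => ih i (by omega) (by omega) _ (hW i (by omega)).1.1) hnew.1

theorem IsTransformW.injOn (hT : IsTransformW n m S π C) : Set.InjOn π (range m) := by
  have key : ∀ a b, a < b → b < m → π a ≠ π b := fun a b hab hb =>
    (hT.settled hb.le _ (hT.2.2.2 b hb).1.1).2.1 a hab
  intro a ha b hb hab
  simp only [coe_range, Set.mem_Iio] at ha hb
  rcases lt_trichotomy a b with h | h | h
  exacts [absurd hab (key a b h hb), h, absurd hab.symm (key b a h ha)]

theorem IsTransformW.nil_not_mem (hT : IsTransformW n m S π C) : [] ∉ C := fun h =>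
  (hT.settled le_rfl [] (hT.2.1 ▸ h)).1 rfl

theorem IsTransformW.palPrefixes_subset (hT : IsTransformW n m S π C) :
    palPrefixes C ⊆ (range m).image π := by
  intro u hu
  obtain ⟨hp, h0, h1, w, hw, hpre, hne⟩ := mem_palPrefixes.1 hu
  obtain ⟨i, hi, rfl⟩ := (hT.settled le_rfl w (hT.2.1 ▸ hw)).2.2 u hp hpre hne h0 h1
  exact mem_image_of_mem π (mem_range.2 hi)

theorem IsTransformW.card_palPrefixes_le (hT : IsTransformW n m S π C) :
    (palPrefixes C).card ≤ m :=
  (card_le_card hT.palPrefixes_subset).trans (card_image_le.trans (card_range m).le)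

theorem IsTransformW.mem_palPrefixes_iff (hT : IsTransformW n m S π C) {i : ℕ} (hi : i < m) :
    π i ∈ palPrefixes C ↔ ∃ w ∈ C, π i <+: w := by
  refine ⟨fun h => ?_, fun ⟨w, hw, hpre⟩ => ?_⟩
  · obtain ⟨-, -, -, w, hw, hpre, -⟩ := mem_palPrefixes.1 h
    exact ⟨w, hw, hpre⟩
  have hπ := (hT.2.2.2 i hi).1.1
  have hSi := hT.2.2.1 i hi.le
  have hfinal := hT.settled le_rfl w (hT.2.1 ▸ hw)
  exact mem_palPrefixes.2 ⟨hSi.1.1 _ hπ, (hT.settled hi.le _ hπ).1,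
    fun h => hSi.2.2.1 (h ▸ hπ), w, hw, hpre, hfinal.2.1 i hi⟩

theorem IsTransformW.le_card_palPrefixes_iff (hT : IsTransformW n m S π C) :
    m ≤ (palPrefixes C).card ↔ ∀ i < m, ∃ w ∈ C, π i <+: w := by
  constructor
  · intro hm i hi
    have heq := eq_of_subset_of_card_le hT.palPrefixes_subset
      (card_image_le.trans ((card_range m).trans_le hm))
    exact (hT.mem_palPrefixes_iff hi).1 (heq ▸ mem_image_of_mem π (mem_range.2 hi))
  · intro h
    rw [← card_range m, ← card_image_of_injOn hT.injOn]
    refine card_le_card fun u hu => ?_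
    obtain ⟨i, hi, rfl⟩ := mem_image.1 hu
    exact (hT.mem_palPrefixes_iff (mem_range.1 hi)).2 (h i (mem_range.1 hi))

theorem IsTransform.exists_transformW (hT : IsTransform n m S C) :
    ∃ π, IsTransformW n m S π C := by
  obtain ⟨hS0, hSm, hSC, hW⟩ := hT
  choose f hf using hW
  exact ⟨fun i => if h : i < m then f i h else [], hS0, hSm, hSC,
    fun i hi => by simpa only [dif_pos hi] using hf i hi⟩

/-! ### Optimal codes cannot be improved by swapping one codeword -/

theorem lenSeq_pairwise (C : Finset (List Bool)) : (lenSeq C).Pairwise (· ≤ ·) :=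
  Multiset.pairwise_sort _ _

theorem length_lenSeq (C : Finset (List Bool)) : (lenSeq C).length = C.card := by
  rw [lenSeq, Multiset.length_sort, Multiset.card_map]
  rfl

theorem countP_lenSeq (C : Finset (List Bool)) (j : ℕ) :
    (lenSeq C).countP (· ≤ j) = (C.val.map List.length).countP (· ≤ j) := by
  rw [← Multiset.coe_countP, lenSeq, Multiset.sort_eq]

theorem nthLen_le_of_countP_le {C C' : Finset (List Bool)} (hcard : C.card = C'.card)
    (hcount : ∀ j, (C.val.map List.length).countP (· ≤ j) ≤
      (C'.val.map List.length).countP (· ≤ j)) (i : ℕ) : nthLen C' i ≤ nthLen C i := by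
  by_cases hi : i < C.card
  · have hiC : i < (lenSeq C).length := by rwa [length_lenSeq]
    have hiC' : i < (lenSeq C').length := by rwa [length_lenSeq, ← hcard]
    rw [nthLen, nthLen, List.getD_eq_getElem _ _ hiC, List.getD_eq_getElem _ _ hiC',
      (lenSeq_pairwise C').getElem_le_iff_lt_countP hiC', countP_lenSeq]
    refine lt_of_lt_of_le ?_ (hcount _)
    rw [← countP_lenSeq, ← (lenSeq_pairwise C).getElem_le_iff_lt_countP hiC]
  · rw [nthLen, List.getD_eq_default _ _ (by rw [length_lenSeq]; omega)]
    exact Nat.zero_le _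

theorem card_insert_erase (hw : w ∈ C) (hv : v ∉ C) : (insert v (C.erase w)).card = C.card := by
  rw [card_insert_of_notMem fun h => hv (mem_of_mem_erase h), card_erase_add_one hw]

theorem map_length_insert_erase (hw : w ∈ C) (hv : v ∉ C) :
    (insert v (C.erase w)).val.map List.length =
      v.length ::ₘ (C.val.map List.length).erase w.length := by
  have hC : C.val.map List.length = w.length ::ₘ (C.val.erase w).map List.length := by
    rw [← Multiset.map_cons, Multiset.cons_erase (mem_def.1 hw)]
  rw [insert_val, Multiset.ndinsert_of_notMem fun h => hv (mem_of_mem_erase h),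
    Multiset.map_cons, erase_val, hC, Multiset.erase_cons_head]

theorem countP_le_countP_insert_erase (hw : w ∈ C) (hv : v ∉ C) (hle : v.length ≤ w.length)
    (j : ℕ) : (C.val.map List.length).countP (· ≤ j) ≤
      ((insert v (C.erase w)).val.map List.length).countP (· ≤ j) := by
  rw [map_length_insert_erase hw hv, Multiset.countP_cons]
  conv_lhs => rw [← Multiset.cons_erase (Multiset.mem_map_of_mem List.length hw)]
  rw [Multiset.countP_cons]
  split_ifs <;> omega

theorem expLen_insert_erase_lt {p : ℕ → ℝ} (hp : IsProbVec p n) (hC : C.card = n)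
    (hw : w ∈ C) (hv : v ∉ C) (hlt : v.length < w.length) :
    expLen p n (insert v (C.erase w)) < expLen p n C := by
  set C' := insert v (C.erase w)
  have hcard : C'.card = n := (card_insert_erase hw hv).trans hC
  have hle := nthLen_le_of_countP_le (hC.trans hcard.symm)
    (countP_le_countP_insert_erase hw hv hlt.le)
  obtain ⟨i, hi, hlt'⟩ : ∃ i < n, nthLen C' i < nthLen C i := by
    by_contra! h
    have hseq : lenSeq C' = lenSeq C := by
      refine List.ext_getElem (by rw [length_lenSeq, length_lenSeq, hC, hcard]) fun i h1 h2 => ?_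
      have := le_antisymm (hle i) (h i (by rwa [length_lenSeq, hcard] at h1))
      rwa [nthLen, nthLen, List.getD_eq_getElem _ _ h1, List.getD_eq_getElem _ _ h2] at this
    have hsum := congrArg (fun l : List ℕ => (l : Multiset ℕ).sum) hseq
    simp only [lenSeq, Multiset.sort_eq, C', map_length_insert_erase hw hv,
      Multiset.sum_cons] at hsum
    have := Multiset.sum_erase (Multiset.mem_map_of_mem List.length hw)
    omega
  refine sum_lt_sum (fun i hi => ?_) ⟨i, mem_range.2 hi, ?_⟩
  · exact mul_le_mul_of_nonneg_left (by exact_mod_cast hle i) (hp.2.1 i (mem_range.1 hi)).le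
  · exact mul_lt_mul_of_pos_left (by exact_mod_cast hlt') (hp.2.1 i hi)

theorem IsOptimal.length_le_of_swap (hC : IsOptimal n C) (hw : w ∈ C) (hv : v ∉ C)
    (hsff : IsSFF (insert v (C.erase w))) : w.length ≤ v.length := by
  obtain ⟨-, hcard, p, hp, hmin⟩ := hC
  by_contra! hlt
  exact (expLen_insert_erase_lt hp hcard hw hv hlt).not_ge
    (hmin _ hsff ((card_insert_erase hw hv).trans hcard))

theorem IsSFF.mono {C' : Finset (List Bool)} (hC : IsSFF C) (h : C' ⊆ C) : IsSFF C' :=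
  ⟨fun w hw => hC.1 w (h hw), fun u hu w hw => hC.2 u (h hu) w (h hw)⟩

theorem IsSFF.insert (hC : IsSFF C) (hv : Palin v) (hpre : ∀ u ∈ C, u <+: v → u = v)
    (hpre' : ∀ u ∈ C, v <+: u → v = u) : IsSFF (insert v C) := by
  refine ⟨fun w hw => ?_, fun u hu w hw huw => ?_⟩
  · rcases mem_insert.1 hw with rfl | hw
    exacts [hv, hC.1 w hw]
  · rcases mem_insert.1 hu with hu | hu <;> rcases mem_insert.1 hw with hw | hw
    · exact hu.trans hw.symm
    · exact hu ▸ hpre' w hw (hu ▸ huw)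
    · exact hw ▸ hpre u hu (hw ▸ huw)
    · exact hC.2 u hu w hw huw

theorem palPrefixes_disjoint (hC : IsSFF C) (hu : u ∈ palPrefixes C) : u ∉ C := fun huC => by
  obtain ⟨-, -, -, w, hw, hpre, hne⟩ := mem_palPrefixes.1 hu
  exact hne (hC.2 u huC w hw hpre)

/-- Such a word `v` could replace a longest codeword of `C`. -/
theorem IsOptimal.maxLen_le (hopt : IsOptimal n C) (h0 : [] ∉ C) (h1 : [true] ∉ C)
    (hv : Palin v) (hv0 : v ≠ []) (hv1 : v ≠ [true]) (hvC : v ∉ C) (hvP : v ∉ palPrefixes C)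
    (hanc : ∀ x, Palin x → x <+: v → x ≠ v → x = [] ∨ x = [true] ∨ x ∈ palPrefixes C) :
    maxLen C ≤ v.length := by
  rcases C.eq_empty_or_nonempty with rfl | hne
  · exact Nat.zero_le _
  obtain ⟨w, hw, hwmax⟩ := exists_mem_eq_sup C hne List.length
  have hsff := hopt.1
  rw [maxLen, hwmax]
  refine hopt.length_le_of_swap hw hvC ((hsff.mono (erase_subset w C)).insert hv ?_ ?_)
  · intro u hu hpre
    by_contra hne
    rcases hanc u (hsff.1 u (mem_of_mem_erase hu)) hpre hne with rfl | rfl | hP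
    exacts [h0 (mem_of_mem_erase hu), h1 (mem_of_mem_erase hu),
      palPrefixes_disjoint hsff hP (mem_of_mem_erase hu)]
  · intro u hu hpre
    by_contra hne
    exact hvP (mem_palPrefixes.2 ⟨hv, hv0, hv1, u, mem_of_mem_erase hu, hpre, hne⟩)

/-! ### The order used by the greedy transformation -/

def prefixClosure (C : Finset (List Bool)) : Finset (List Bool) :=
  C ∪ palPrefixes C

theorem length_le_maxLen_of_mem_prefixClosure (hx : x ∈ prefixClosure C) :
    x.length ≤ maxLen C := by
  rcases mem_union.1 hx with hx | hx
  · exact le_sup hx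
  · obtain ⟨-, -, -, w, hw, hpre, -⟩ := mem_palPrefixes.1 hx
    exact hpre.length_le.trans (le_sup hw)

theorem mem_palPrefixes_of_prefix (hx : x ∈ prefixClosure C) (hσ : Palin σ) (hpre : σ <+: x)
    (hne : σ ≠ x) (h0 : σ ≠ []) (h1 : σ ≠ [true]) : σ ∈ palPrefixes C := by
  rcases mem_union.1 hx with hx | hx
  · exact mem_palPrefixes.2 ⟨hσ, h0, h1, x, hx, hpre, hne⟩
  · obtain ⟨-, -, -, w, hw, hpre', hne'⟩ := mem_palPrefixes.1 hx
    refine mem_palPrefixes.2 ⟨hσ, h0, h1, w, hw, hpre.trans hpre', fun h => ?_⟩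
    subst h
    exact hne (hpre.eq_of_length (le_antisymm hpre.length_le hpre'.length_le))

/-- Among words of equal length, those of `prefixClosure C` come first, so that the longest
codewords are never pushed out by other words of the same length. -/
def codeKey (C : Finset (List Bool)) (w : List Bool) : ℕ ×ₗ ℕ ×ₗ ℕ :=
  toLex (w.length, toLex (if w ∈ prefixClosure C then 0 else 1, Encodable.encode w))

theorem codeKey_injective (C : Finset (List Bool)) : Function.Injective (codeKey C) := by
  intro x y h
  simp only [codeKey, toLex_inj, Prod.mk.injEq] at h
  exact Encodable.encode_injective h.2.2

theorem codeKey_lt_of_length_lt (h : x.length < w.length) : codeKey C x < codeKey C w :=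
  Prod.Lex.toLex_lt_toLex.2 (Or.inl h)

theorem length_le_of_codeKey_lt (h : codeKey C x < codeKey C w) : x.length ≤ w.length := by
  rcases Prod.Lex.toLex_lt_toLex.1 h with h | ⟨h, -⟩
  exacts [h.le, h.le]

theorem codeKey_lt_of_mem_prefixClosure (hx : x ∈ prefixClosure C) (hw : w ∉ prefixClosure C)
    (hle : x.length ≤ w.length) : codeKey C x < codeKey C w := by
  refine Prod.Lex.toLex_lt_toLex.2 (hle.lt_or_eq.imp id fun h => ⟨h, ?_⟩)
  exact Prod.Lex.toLex_lt_toLex.2 (Or.inl (by simp [hx, hw]))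

/-! ### The greedy transformation -/

open Classical in
noncomputable def nthPrefix (C : Finset (List Bool)) (k : ℕ) : List Bool :=
  if h : ∃ x ∈ palPrefixes C, rank (codeKey C) (palPrefixes C) x = k then h.choose else []

theorem nthPrefix_spec (hk : k < (palPrefixes C).card) :
    nthPrefix C k ∈ palPrefixes C ∧ rank (codeKey C) (palPrefixes C) (nthPrefix C k) = k := by
  have h := exists_rank_eq (codeKey_injective C).injOn hk
  rw [nthPrefix, dif_pos h]
  exact h.choose_spec

theorem nthPrefix_rank (hx : x ∈ palPrefixes C) :
    nthPrefix C (rank (codeKey C) (palPrefixes C) x) = x :=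
  have h := nthPrefix_spec (rank_lt_card hx)
  rank_injOn (codeKey_injective C).injOn h.1 hx h.2

theorem nthPrefix_injective {i j : ℕ} (hi : i < (palPrefixes C).card)
    (hj : j < (palPrefixes C).card) (h : nthPrefix C i = nthPrefix C j) : i = j := by
  rw [← (nthPrefix_spec hi).2, h, (nthPrefix_spec hj).2]

theorem exists_nthPrefix_eq (hσ : σ ∈ palPrefixes C) (hk : k < (palPrefixes C).card)
    (h : codeKey C σ < codeKey C (nthPrefix C k)) : ∃ j < k, nthPrefix C j = σ :=
  ⟨_, (nthPrefix_spec hk).2 ▸ rank_lt_rank hσ h, nthPrefix_rank hσ⟩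

noncomputable def nbhdFinset (n : ℕ) (σ : List Bool) : Finset (List Bool) :=
  ((List.finite_length_le Bool n).subset fun _ hw => hw.2 : (NbhdN n σ).Finite).toFinset

theorem mem_nbhdFinset : w ∈ nbhdFinset n σ ↔ w ∈ NbhdN n σ := Set.Finite.mem_toFinset _

noncomputable def pool (n : ℕ) (C : Finset (List Bool)) : ℕ → Finset (List Bool)
  | 0 => rootCode n
  | k + 1 => (pool n C k).erase (nthPrefix C k) ∪ nbhdFinset n (nthPrefix C k)

theorem mem_pool_succ : x ∈ pool n C (k + 1) ↔
    (x ≠ nthPrefix C k ∧ x ∈ pool n C k) ∨ x ∈ NbhdN n (nthPrefix C k) := by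
  rw [pool, mem_union, mem_erase, mem_nbhdFinset]

theorem mem_pool_of_mem_nbhd (hx : x ∈ NbhdN n σ) (hx1 : x ≠ [true])
    (hσ : σ = [] ∨ σ = [true] ∨ ∃ j < k, nthPrefix C j = σ)
    (hfresh : ∀ j < k, nthPrefix C j ≠ x) : x ∈ pool n C k := by
  induction k with
  | zero =>
    rw [pool, mem_rootCode]
    rcases hσ with hσ | hσ | ⟨j, hj, -⟩
    · exact ⟨isRoot_of_mem_nbhd hx.1 (Or.inl hσ) hx1, hx.2⟩
    · exact ⟨isRoot_of_mem_nbhd hx.1 (Or.inr hσ) hx1, hx.2⟩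
    · omega
  | succ k ih =>
    rw [mem_pool_succ]
    by_cases hk : nthPrefix C k = σ
    · exact Or.inr (hk ▸ hx)
    refine Or.inl ⟨(hfresh k (by omega)).symm, ih ?_ fun j hj => hfresh j (by omega)⟩
    rcases hσ with hσ | hσ | ⟨j, hj, rfl⟩
    · exact Or.inl hσ
    · exact Or.inr (Or.inl hσ)
    · exact Or.inr (Or.inr
        ⟨j, lt_of_le_of_ne (Nat.lt_succ_iff.1 hj) fun h => hk (h ▸ rfl), rfl⟩)

theorem parent_trivial_or_mem (hy : y ∈ prefixClosure C) (hσ : y ∈ Nbhd σ) :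
    σ = [] ∨ σ = [true] ∨ σ ∈ palPrefixes C := by
  by_cases h0 : σ = []
  · exact Or.inl h0
  by_cases h1 : σ = [true]
  · exact Or.inr (Or.inl h1)
  exact Or.inr (Or.inr (mem_palPrefixes_of_prefix hy hσ.2.1 hσ.2.2.1 hσ.2.2.2.1 h0 h1))

theorem nthPrefix_mem_pool (hlen : ∀ w ∈ C, w.length ≤ n) (hk : k < (palPrefixes C).card) :
    nthPrefix C k ∈ pool n C k := by
  have hu := (nthPrefix_spec hk).1
  obtain ⟨hp, h0, h1, w, hw, hpre, -⟩ := mem_palPrefixes.1 hu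
  obtain ⟨σ, hσ⟩ := exists_mem_nbhd hp h0
  refine mem_pool_of_mem_nbhd ⟨hσ, hpre.length_le.trans (hlen w hw)⟩ h1 ?_ fun j hj h => ?_
  · rcases parent_trivial_or_mem (mem_union_right _ hu) hσ with h | h | h
    · exact Or.inl h
    · exact Or.inr (Or.inl h)
    · exact Or.inr (Or.inr
        (exists_nthPrefix_eq h hk (codeKey_lt_of_length_lt (mem_nbhd_length_lt hσ))))
  · exact absurd (nthPrefix_injective (by omega) hk h) (by omega)

/-- The pool evolves like the codes of a transformation, so its words are settled. -/
theorem pool_spec (hlen : ∀ w ∈ C, w.length ≤ n) (hk : k ≤ (palPrefixes C).card)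
    (hx : x ∈ pool n C k) :
    Palin x ∧ x.length ≤ n ∧ x ≠ [true] ∧ Settled (nthPrefix C) k x := by
  induction k using Nat.strong_induction_on generalizing x with
  | _ k ih =>
    rcases k with _ | k
    · rw [pool, mem_rootCode] at hx
      exact ⟨hx.1.palin, hx.2, hx.1.ne_one, hx.1.settled⟩
    have hu := nthPrefix_mem_pool hlen (k := k) (by omega)
    rcases mem_pool_succ.1 hx with ⟨hne, hx⟩ | hx
    · obtain ⟨hp, hxn, h1, hset⟩ := ih k (by omega) (by omega) hx
      exact ⟨hp, hxn, h1, hset.succ (Ne.symm hne)⟩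
    · obtain ⟨-, -, hu1, husettled⟩ := ih k (by omega) (by omega) hu
      have hlt := mem_nbhd_length_lt hx.1
      have hu0 := husettled.1
      refine ⟨hx.1.1, hx.2, fun h => hu0 ?_, husettled.child hu1
        (fun i hi => (ih i (by omega) (by omega) (nthPrefix_mem_pool hlen (by omega))).2.2.2) hx.1⟩
      subst h
      simpa using hlt

theorem pool_antichain (hlen : ∀ w ∈ C, w.length ≤ n) (hk : k ≤ (palPrefixes C).card)
    (hx : x ∈ pool n C k) (hy : y ∈ pool n C k) (hxy : x <+: y) : x = y := by
  by_contra hne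
  obtain ⟨hxp, -, hx1, hx0, hxfresh, -⟩ := pool_spec hlen hk hx
  obtain ⟨j, hj, rfl⟩ := (pool_spec hlen hk hy).2.2.2.2.2 x hxp hxy hne hx0 hx1
  exact hxfresh j hj rfl

theorem card_pool_inter_le (hlen : ∀ w ∈ C, w.length ≤ n) (hk : k ≤ (palPrefixes C).card) :
    (pool n C k ∩ prefixClosure C).card ≤ C.card := by
  refine card_le_card_of_forall_subsingleton (fun x w => x <+: w) (fun x hx => ?_)
    fun w _ x hx y hy => ?_
  · rcases mem_union.1 (mem_inter.1 hx).2 with hxC | hxP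
    · exact ⟨x, hxC, List.prefix_refl x⟩
    · obtain ⟨-, -, -, w, hw, hpre, -⟩ := mem_palPrefixes.1 hxP
      exact ⟨w, hw, hpre⟩
  · have hxA := (mem_inter.1 (mem_coe.1 hx.1)).1
    have hyA := (mem_inter.1 (mem_coe.1 hy.1)).1
    rcases List.prefix_or_prefix_of_prefix hx.2 hy.2 with h | h
    · exact pool_antichain hlen hk hxA hyA h
    · exact (pool_antichain hlen hk hyA hxA h).symm

theorem maxLen_le_of_mem_pool (hopt : IsOptimal n C) (hC : C ∈ SCodes n) (h0 : [] ∉ C)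
    (hk : k ≤ (palPrefixes C).card) (hx : x ∈ pool n C k) (hxD : x ∉ prefixClosure C) :
    maxLen C ≤ x.length := by
  obtain ⟨hxp, -, hx1, hx0, -, hanc⟩ := pool_spec hC.2.2.2 hk hx
  refine hopt.maxLen_le h0 hC.2.2.1 hxp hx0 hx1 (fun h => hxD (mem_union_left _ h))
    (fun h => hxD (mem_union_right _ h)) fun y hy hpre hne => ?_
  by_cases hy0 : y = []
  · exact Or.inl hy0
  by_cases hy1 : y = [true]
  · exact Or.inr (Or.inl hy1)
  obtain ⟨j, hj, rfl⟩ := hanc y hy hpre hne hy0 hy1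
  exact Or.inr (Or.inr (nthPrefix_spec (by omega)).1)

/-- By optimality the other words of the pool are at least as long as those of
`prefixClosure C`, and the pool contains at most `n` of the latter. -/
theorem pool_inter_subset_lowest (hopt : IsOptimal n C) (hC : C ∈ SCodes n) (h0 : [] ∉ C)
    (hk : k ≤ (palPrefixes C).card) :
    pool n C k ∩ prefixClosure C ⊆ lowest (codeKey C) n (pool n C k) := by
  intro x hx
  obtain ⟨hxA, hxD⟩ := mem_inter.1 hx
  refine mem_lowest.2 ⟨hxA, ?_⟩
  calc rank (codeKey C) (pool n C k) x < (pool n C k ∩ prefixClosure C).card := by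
        refine card_lt_card ((ssubset_iff_of_subset fun y hy => ?_).2
          ⟨x, hx, fun h => lt_irrefl _ (mem_filter.1 h).2⟩)
        obtain ⟨hyA, hyx⟩ := mem_filter.1 hy
        refine mem_inter.2 ⟨hyA, by_contra fun hyD => hyx.not_gt ?_⟩
        exact codeKey_lt_of_mem_prefixClosure hxD hyD ((length_le_maxLen_of_mem_prefixClosure
          hxD).trans (maxLen_le_of_mem_pool hopt hC h0 hk hyA hyD))
    _ ≤ C.card := card_pool_inter_le hC.2.2.2 hk
    _ = n := hC.2.1

theorem exists_child (hC : C ∈ SCodes n) (hk : k < (palPrefixes C).card) :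
    ∃ c ∈ NbhdN n (nthPrefix C k), c ∈ prefixClosure C ∧ c ∉ pool n C k := by
  have hu := (nthPrefix_spec hk).1
  obtain ⟨hp, h0, h1, w, hw, hpre, hne⟩ := mem_palPrefixes.1 hu
  obtain ⟨c, hc, hcw⟩ := exists_mem_nbhd_prefix hp (hC.1.1 w hw) hpre hne
  have hc2 : 2 ≤ c.length := by
    have := List.length_pos_iff.2 h0
    have := mem_nbhd_length_lt hc
    omega
  have hcD : c ∈ prefixClosure C := by
    by_cases hcw' : c = w
    · exact mem_union_left _ (hcw' ▸ hw)
    · exact mem_union_right _ (mem_palPrefixes.2 ⟨hc.1, fun h => by simp [h] at hc2,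
        fun h => by simp [h] at hc2, w, hw, hcw, hcw'⟩)
  refine ⟨c, ⟨hc, hcw.length_le.trans (hC.2.2.2 w hw)⟩, hcD, fun hcA => ?_⟩
  obtain ⟨j, hj, hju⟩ :=
    (pool_spec hC.2.2.2 hk.le hcA).2.2.2.2.2 _ hp hc.2.2.1 hc.2.2.2.1 h0 h1
  exact absurd (nthPrefix_injective (by omega) hk hju) (by omega)

theorem card_pool_ge (hC : C ∈ SCodes n) (hk : k ≤ (palPrefixes C).card) :
    n ≤ (pool n C k).card := by
  induction k with
  | zero => rw [pool, card_rootCode]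
  | succ k ih =>
    obtain ⟨c, hcN, -, hcA⟩ := exists_child hC (k := k) (by omega)
    refine (ih (by omega)).trans (card_le_card_of_insert_erase_subset (a := nthPrefix C k)
      (fun h => hcA (mem_of_mem_erase h)) fun x hx => ?_)
    rcases mem_insert.1 hx with rfl | hx
    · exact mem_pool_succ.2 (Or.inr hcN)
    · exact mem_pool_succ.2 (Or.inl (mem_erase.1 hx))

theorem card_pool_inter_le_succ (hC : C ∈ SCodes n) (hk : k < (palPrefixes C).card) :
    (pool n C k ∩ prefixClosure C).card ≤ (pool n C (k + 1) ∩ prefixClosure C).card := by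
  obtain ⟨c, hcN, hcD, hcA⟩ := exists_child hC hk
  refine card_le_card_of_insert_erase_subset (a := nthPrefix C k)
    (fun h => hcA (mem_inter.1 (mem_of_mem_erase h)).1) fun x hx => ?_
  rcases mem_insert.1 hx with rfl | hx
  · exact mem_inter.2 ⟨mem_pool_succ.2 (Or.inr hcN), hcD⟩
  · obtain ⟨hne, hx⟩ := mem_erase.1 hx
    exact mem_inter.2 ⟨mem_pool_succ.2 (Or.inl ⟨hne, (mem_inter.1 hx).1⟩), (mem_inter.1 hx).2⟩

theorem rank_pool_of_not_mem (hw : w ∉ prefixClosure C) (hmax : maxLen C ≤ w.length) :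
    rank (codeKey C) (pool n C k) w = (pool n C k ∩ prefixClosure C).card +
      ((pool n C k).filter fun y => y ∉ prefixClosure C ∧ codeKey C y < codeKey C w).card := by
  have hsplit : (pool n C k).filter (fun y => codeKey C y < codeKey C w) =
      pool n C k ∩ prefixClosure C ∪
        (pool n C k).filter fun y => y ∉ prefixClosure C ∧ codeKey C y < codeKey C w := by
    ext y
    simp only [mem_filter, mem_union, mem_inter]
    by_cases hy : y ∈ prefixClosure C
    · simp [hy, codeKey_lt_of_mem_prefixClosure hy hw
        ((length_le_maxLen_of_mem_prefixClosure hy).trans hmax)]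
    · simp [hy]
  rw [rank, hsplit, card_union_of_disjoint]
  exact disjoint_left.2 fun y hy hy' => (mem_filter.1 hy').2.1 (mem_inter.1 hy).2

theorem rank_pool_le_rank_pool_succ (hC : C ∈ SCodes n) (hk : k < (palPrefixes C).card)
    (hw : w ∉ prefixClosure C) (hmax : maxLen C ≤ w.length) :
    rank (codeKey C) (pool n C k) w ≤ rank (codeKey C) (pool n C (k + 1)) w := by
  rw [rank_pool_of_not_mem hw hmax, rank_pool_of_not_mem hw hmax]
  refine add_le_add (card_pool_inter_le_succ hC hk) (card_le_card fun y hy => ?_)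
  obtain ⟨hyA, hyD, hyw⟩ := mem_filter.1 hy
  have hne : y ≠ nthPrefix C k := fun h => hyD (h ▸ mem_union_right _ (nthPrefix_spec hk).1)
  exact mem_filter.2 ⟨mem_pool_succ.2 (Or.inl ⟨hne, hyA⟩), hyD, hyw⟩

noncomputable def greedy (n : ℕ) (C : Finset (List Bool)) (k : ℕ) : Finset (List Bool) :=
  lowest (codeKey C) n (pool n C k)

theorem greedy_mem_sCodes (hC : C ∈ SCodes n) (hk : k ≤ (palPrefixes C).card) :
    greedy n C k ∈ SCodes n := by
  have hspec := fun x (hx : x ∈ greedy n C k) => pool_spec hC.2.2.2 hk (lowest_subset hx)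
  refine ⟨⟨fun w hw => (hspec w hw).1, fun u hu w hw =>
    pool_antichain hC.2.2.2 hk (lowest_subset hu) (lowest_subset hw)⟩, ?_,
    fun h => (hspec _ h).2.2.1 rfl, fun w hw => (hspec w hw).2.1⟩
  rw [greedy, card_lowest (codeKey_injective C).injOn, min_eq_left (card_pool_ge hC hk)]

theorem mem_greedy_of_mem_greedy_succ (hopt : IsOptimal n C) (hC : C ∈ SCodes n) (h0 : [] ∉ C)
    (hk : k < (palPrefixes C).card) (hw : w ∈ greedy n C (k + 1)) (hwA : w ∈ pool n C k) :
    w ∈ greedy n C k := by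
  by_cases hD : w ∈ prefixClosure C
  · exact pool_inter_subset_lowest hopt hC h0 hk.le (mem_inter.2 ⟨hwA, hD⟩)
  · refine mem_lowest.2 ⟨hwA, lt_of_le_of_lt ?_ (mem_lowest.1 hw).2⟩
    exact rank_pool_le_rank_pool_succ hC hk hD (maxLen_le_of_mem_pool hopt hC h0 hk.le hwA hD)

theorem greedy_step (hopt : IsOptimal n C) (hC : C ∈ SCodes n) (h0 : [] ∉ C)
    (hk : k < (palPrefixes C).card) :
    StepTo n (nthPrefix C k) (greedy n C k) (greedy n C (k + 1)) := by
  have hu : nthPrefix C k ∈ pool n C k ∩ prefixClosure C :=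
    mem_inter.2 ⟨nthPrefix_mem_pool hC.2.2.2 hk, mem_union_right _ (nthPrefix_spec hk).1⟩
  refine ⟨⟨pool_inter_subset_lowest hopt hC h0 hk.le hu, fun w hw => ?_⟩,
    (greedy_mem_sCodes hC hk).2.1, fun w hwS hwne hwT v hv => ?_⟩
  · rcases mem_pool_succ.1 (lowest_subset hw) with ⟨hne, hwA⟩ | hN
    · exact ⟨Or.inl (mem_greedy_of_mem_greedy_succ hopt hC h0 hk hw hwA), hne⟩
    · exact ⟨Or.inr hN, fun h => hN.1.2.2.2.1 h.symm⟩
  · have hwA : w ∈ pool n C (k + 1) :=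
      mem_pool_succ.2 (hwS.imp (fun h => ⟨hwne, lowest_subset h⟩) id)
    exact length_le_of_codeKey_lt (lt_of_not_mem_lowest hwA hwT hv)

theorem subset_pool (hC : C ∈ SCodes n) (h0 : [] ∉ C) :
    C ⊆ pool n C (palPrefixes C).card := by
  intro w hw
  obtain ⟨σ, hσ⟩ := exists_mem_nbhd (hC.1.1 w hw) fun h => h0 (h ▸ hw)
  refine mem_pool_of_mem_nbhd ⟨hσ, hC.2.2.2 w hw⟩ (fun h => hC.2.2.1 (h ▸ hw)) ?_
    fun j hj h => palPrefixes_disjoint hC.1 (nthPrefix_spec hj).1 (h ▸ hw)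
  rcases parent_trivial_or_mem (mem_union_left _ hw) hσ with h | h | h
  · exact Or.inl h
  · exact Or.inr (Or.inl h)
  · exact Or.inr (Or.inr ⟨_, rank_lt_card h, nthPrefix_rank h⟩)

theorem greedy_final (hopt : IsOptimal n C) (hC : C ∈ SCodes n) (h0 : [] ∉ C) :
    greedy n C (palPrefixes C).card = C := by
  have hsub : C ⊆ greedy n C (palPrefixes C).card := fun w hw =>
    pool_inter_subset_lowest hopt hC h0 le_rfl
      (mem_inter.2 ⟨subset_pool hC h0 hw, mem_union_left _ hw⟩)
  exact (eq_of_subset_of_card_le hsub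
    (by rw [(greedy_mem_sCodes hC le_rfl).2.1, hC.2.1])).symm

theorem greedy_isTransform (hopt : IsOptimal n C) (hC : C ∈ SCodes n) (h0 : [] ∉ C) :
    IsTransform n (palPrefixes C).card (greedy n C) C :=
  ⟨lowest_eq_self (card_rootCode n).le, greedy_final hopt hC h0,
    fun _ hk => greedy_mem_sCodes hC hk, fun _ hk => ⟨_, greedy_step hopt hC h0 hk⟩⟩

end Development

/-- Let `C ∈ O_n` and `R_n = S⁰ ⇒^{π_1} ⋯ ⇒^{π_m} Sᵐ = C` with all
`Sⁱ ∈ S_n`. This is a shortest `⇒`-transformation from `R_n` to `C` iff each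
`π_i` is a prefix of at least one codeword of `C`. -/
theorem shortest_iff_prefixes (n m : ℕ) (C : Finset (List Bool)) (hC : InOpt n C)
    (S : ℕ → Finset (List Bool)) (π : ℕ → List Bool)
    (hT : IsTransformW n m S π C) :
    (∀ (m' : ℕ) (S' : ℕ → Finset (List Bool)), IsTransform n m' S' C → m ≤ m') ↔
      ∀ i < m, ∃ w ∈ C, π i <+: w := by
  rw [← hT.le_card_palPrefixes_iff]
  constructor
  · intro hshort
    exact hshort _ _ (greedy_isTransform hC.1 (hT.2.1 ▸ hT.2.2.1 m le_rfl) hT.nil_not_mem)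
  · intro hm m' S' hT'
    obtain ⟨π', hT'⟩ := hT'.exists_transformW
    exact hm.trans hT'.card_palPrefixes_le
end

section
/- If C ∈ O_n, then for every index i with 2i ≥ n, the root codeword s_i is not an element of C^prefix; that is, s_i is not a proper prefix of any codeword of C. -/
/-!
If `s_i` were a proper prefix of a codeword, look at the set `W` of codewords extending it. A
palindrome properly extending `s_i` has length at least `2i - 1`, and at most one has length
below `2i`. Replace `W` by `s_i` together with `|W| - 1` root words `s_j`, `j ≤ 2i`, that are
prefixes of no codeword; since a word has at most one root word as a prefix and `n ≤ 2i`, enough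
of them exist. The result is again a symmetric fix-free code with `n` codewords whose sorted
length sequence is pointwise no larger and strictly smaller in total, so it has strictly smaller
expected length for every positive probability vector, contradicting optimality.
-/

lemma rootWord_of_two_le {j : ℕ} (hj : 2 ≤ j) :
    rootWord j = true :: (List.replicate (j - 2) false ++ [true]) :=
  if_neg (by omega)

lemma length_rootWord_s15 {j : ℕ} (hj : 1 ≤ j) : (rootWord j).length = j := by
  unfold rootWord; split <;> simp <;> omega

lemma palin_rootWord (j : ℕ) : Palin (rootWord j) := by
  unfold Palin rootWord; split <;> simp

lemma eq_nil_or_eq_one_or_eq_of_prefix_rootWord {j : ℕ} {u : List Bool} (hj : 1 ≤ j)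
    (hu : Palin u) (h : u <+: rootWord j) : u = [] ∨ u = [true] ∨ u = rootWord j := by
  obtain rfl | hj := hj.eq_or_lt
  · rcases List.prefix_cons_iff.mp h with rfl | ⟨t, rfl, ht⟩
    · exact .inl rfl
    · rw [List.prefix_nil.mp ht]
      exact .inr (.inr rfl)
  rw [rootWord_of_two_le hj] at h ⊢
  rcases List.prefix_cons_iff.mp h with rfl | ⟨t, rfl, ht⟩
  · exact .inl rfl
  rcases List.prefix_concat_iff.mp ht with rfl | ht
  · exact .inr (.inr rfl)
  rw [(List.prefix_replicate_iff.mp ht).2] at hu ⊢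
  generalize t.length = m at hu ⊢
  cases m with
  | zero => exact .inr (.inl rfl)
  | succ m =>
    -- the reversal of `1 0^(m+1)` starts with `0`
    rw [Palin, List.reverse_cons, List.reverse_replicate, List.replicate_succ] at hu
    simp at hu

lemma eq_of_rootWord_prefix_rootWord {j k : ℕ} (hj : 1 ≤ j) (hk : 1 ≤ k)
    (h : rootWord j <+: rootWord k) : j = k := by
  rcases eq_nil_or_eq_one_or_eq_of_prefix_rootWord hk (palin_rootWord j) h with h' | h' | h'
  · have := congrArg List.length h'
    simp [length_rootWord_s15 hj] at this
    omega
  · have hj1 : j = 1 := by simpa [length_rootWord_s15 hj] using congrArg List.length h'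
    simp [hj1, rootWord] at h'
  · simpa [length_rootWord_s15 hj, length_rootWord_s15 hk] using congrArg List.length h'

lemma eq_of_rootWord_prefix_of_rootWord_prefix {j k : ℕ} {w : List Bool} (hj : 1 ≤ j)
    (hk : 1 ≤ k) (hjw : rootWord j <+: w) (hkw : rootWord k <+: w) : j = k := by
  rcases le_total j k with h | h
  · refine eq_of_rootWord_prefix_rootWord hj hk (List.prefix_of_prefix_length_le hjw hkw ?_)
    rwa [length_rootWord_s15 hj, length_rootWord_s15 hk]
  · refine (eq_of_rootWord_prefix_rootWord hk hj (List.prefix_of_prefix_length_le hkw hjw ?_)).symm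
    rwa [length_rootWord_s15 hj, length_rootWord_s15 hk]

lemma Palin.suffix_of_prefix {u w : List Bool} (hu : Palin u) (hw : Palin w) (h : u <+: w) :
    u <:+ w := by
  rw [← List.reverse_prefix, hu, hw]
  exact h

lemma List.IsPrefix.length_lt_of_ne_s15 {α : Type*} {u w : List α} (h : u <+: w) (hne : u ≠ w) :
    u.length < w.length :=
  h.length_le.lt_of_ne fun hl => hne (h.eq_of_length hl)

lemma Palin.getElem_eq {v : List Bool} (hv : Palin v) {m : ℕ} (hm : m < v.length) :
    v[m] = v[v.length - 1 - m] :=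
  (List.getElem_of_eq hv (by simpa using hm)).symm.trans (List.getElem_reverse _)

lemma Palin.eq_of_take_eq {v w : List Bool} {k : ℕ} (hv : Palin v) (hw : Palin w)
    (hlen : v.length = w.length) (hk : v.length ≤ 2 * k) (h : v.take k = w.take k) : v = w := by
  have hfirst : ∀ m (hv : m < v.length) (hw : m < w.length), m < k → v[m] = w[m] := by
    intro m hmv hmw hmk
    have := List.getElem_of_eq h (by simp; omega : m < (v.take k).length)
    rwa [List.getElem_take, List.getElem_take] at this
  refine List.ext_getElem hlen fun m hmv hmw => ?_
  by_cases hmk : m < k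
  · exact hfirst m hmv hmw hmk
  -- the mirror image of position `m` lies in the first half
  rw [hv.getElem_eq, hw.getElem_eq]
  exact (hfirst _ (by omega) (by omega) (by omega)).trans (by simp only [hlen])

lemma two_mul_sub_one_le_length_of_rootWord_prefix {i : ℕ} {w : List Bool} (hi : 1 ≤ i)
    (hw : Palin w) (hpre : rootWord i <+: w) (hne : rootWord i ≠ w) : 2 * i - 1 ≤ w.length := by
  have hlt := hpre.length_lt_of_ne_s15 hne
  rw [length_rootWord_s15 hi] at hlt
  by_contra! hshort
  have hi2 : 2 ≤ i := by omega
  -- `s_i` is also a suffix of `w`: its leading `1` lands inside the `0`-block of the prefix `s_i`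
  have hsuf := (palin_rootWord i).suffix_of_prefix hw hpre
  rw [rootWord_of_two_le hi2] at hpre hsuf
  have h1 := hsuf.getElem (i := 0) (by simp)
  obtain ⟨d, hd⟩ : ∃ d, w.length - i = d + 1 := ⟨w.length - i - 1, by omega⟩
  have h0 := hpre.getElem (i := d + 1) (by simp; omega)
  simp only [List.getElem_cons_zero, List.getElem_cons_succ, List.length_cons, List.length_append,
    List.length_replicate, List.length_nil] at h1 h0
  rw [List.getElem_append_left (by simp; omega), List.getElem_replicate] at h0
  simp only [show w.length - (i - 2 + (0 + 1) + 1) + 0 = d + 1 by omega] at h1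
  exact Bool.false_ne_true (h0.trans h1.symm)

lemma eq_of_rootWord_prefix_of_length_lt {i : ℕ} {v w : List Bool} (hi : 1 ≤ i) (hv : Palin v)
    (hw : Palin w) (hvpre : rootWord i <+: v) (hwpre : rootWord i <+: w) (hvne : rootWord i ≠ v)
    (hwne : rootWord i ≠ w) (hvlen : v.length < 2 * i) (hwlen : w.length < 2 * i) : v = w := by
  have := two_mul_sub_one_le_length_of_rootWord_prefix hi hv hvpre hvne
  have := two_mul_sub_one_le_length_of_rootWord_prefix hi hw hwpre hwne
  refine hv.eq_of_take_eq hw (by omega) (k := i) (by omega) ?_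
  rw [← length_rootWord_s15 hi, ← List.prefix_iff_eq_take.mp hvpre, ← List.prefix_iff_eq_take.mp hwpre]

lemma exists_forall_two_mul_le_length {i : ℕ} {W : Finset (List Bool)} (hi : 1 ≤ i)
    (hW : ∀ w ∈ W, Palin w ∧ rootWord i <+: w ∧ rootWord i ≠ w) (hne : W.Nonempty) :
    ∃ w₀ ∈ W, ∀ w ∈ W.erase w₀, 2 * i ≤ w.length := by
  by_cases hshort : ∃ w₀ ∈ W, w₀.length < 2 * i
  · obtain ⟨w₀, hw₀, hlen₀⟩ := hshort
    refine ⟨w₀, hw₀, fun w hw => ?_⟩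
    obtain ⟨hne, hwW⟩ := Finset.mem_erase.mp hw
    by_contra! hlen
    obtain ⟨hpal, hpre, hne'⟩ := hW w hwW
    obtain ⟨hpal₀, hpre₀, hne₀⟩ := hW w₀ hw₀
    exact hne (eq_of_rootWord_prefix_of_length_lt hi hpal hpal₀ hpre hpre₀ hne' hne₀ hlen hlen₀)
  · push Not at hshort
    obtain ⟨w₀, hw₀⟩ := hne
    exact ⟨w₀, hw₀, fun w hw => hshort w (Finset.mem_of_mem_erase hw)⟩

lemma injOn_rootWord : Set.InjOn rootWord {j | 1 ≤ j} := fun j hj k hk h => by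
  rw [← length_rootWord_s15 hj, ← length_rootWord_s15 hk, h]

section RootWordExtension

variable {D : Finset (List Bool)} {J : Finset ℕ}

lemma isSFF_union_image_rootWord (hD : IsSFF D) (hnil : [] ∉ D) (hone : [true] ∉ D)
    (hJ : ∀ j ∈ J, 1 ≤ j) (hfree : ∀ j ∈ J, ∀ w ∈ D, ¬ rootWord j <+: w) :
    IsSFF (D ∪ J.image rootWord) := by
  constructor
  · intro w hw
    rcases Finset.mem_union.mp hw with hw | hw
    · exact hD.1 w hw
    · obtain ⟨j, -, rfl⟩ := Finset.mem_image.mp hw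
      exact palin_rootWord j
  · intro u hu w hw huw
    simp only [Finset.mem_union, Finset.mem_image] at hu hw
    rcases hu with hu | ⟨j, hj, rfl⟩ <;> rcases hw with hw | ⟨k, hk, rfl⟩
    · exact hD.2 u hu w hw huw
    · rcases eq_nil_or_eq_one_or_eq_of_prefix_rootWord (hJ k hk) (hD.1 u hu) huw with
        rfl | rfl | h
      · exact absurd hu hnil
      · exact absurd hu hone
      · exact h
    · exact absurd huw (hfree j hj w hw)
    · rw [eq_of_rootWord_prefix_rootWord (hJ j hj) (hJ k hk) huw]

lemma map_length_union_image_rootWord (hJ : ∀ j ∈ J, 1 ≤ j)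
    (hfree : ∀ j ∈ J, ∀ w ∈ D, ¬ rootWord j <+: w) :
    (D ∪ J.image rootWord).val.map List.length = D.val.map List.length + J.val := by
  have hdisj : Disjoint D (J.image rootWord) := by
    refine Finset.disjoint_right.mpr fun w hw hwD => ?_
    obtain ⟨j, hj, rfl⟩ := Finset.mem_image.mp hw
    exact hfree j hj _ hwD List.prefix_rfl
  rw [← Finset.disjUnion_eq_union _ _ hdisj, Finset.disjUnion_val, Multiset.map_add,
    Finset.image_val_of_injOn (injOn_rootWord.mono hJ), Multiset.map_map]
  congr 1
  exact (Multiset.map_congr rfl fun j hj => length_rootWord_s15 (hJ j hj)).trans (Multiset.map_id _)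

end RootWordExtension

def freeRootIndices (C : Finset (List Bool)) (N : ℕ) : Finset ℕ :=
  {j ∈ Finset.Icc 1 N | ∀ w ∈ C, ¬ rootWord j <+: w}

lemma card_filter_rootWord_prefix_le {C : Finset (List Bool)} {i N : ℕ} (hi : 1 ≤ i)
    (hN : C.card ≤ N) :
    (C.filter (rootWord i <+: ·)).card ≤ (freeRootIndices C N).card + 1 := by
  set W := C.filter (rootWord i <+: ·)
  set used := {j ∈ Finset.Icc 1 N | ¬ ∀ w ∈ C, ¬ rootWord j <+: w}
  have hsplit : (freeRootIndices C N).card + used.card = N := by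
    rw [freeRootIndices, Finset.card_filter_add_card_filter_not, Nat.card_Icc, Nat.add_sub_cancel]
  -- each used index other than `i` is witnessed by its own codeword outside `W`
  have hused : (used.erase i).card ≤ (C \ W).card := by
    refine Finset.card_le_card_of_forall_subsingleton (fun j w => rootWord j <+: w) ?_ ?_
    · intro j hj
      obtain ⟨hji, hj⟩ := Finset.mem_erase.mp hj
      obtain ⟨hjN, hjC⟩ := Finset.mem_filter.mp hj
      push Not at hjC
      obtain ⟨w, hwC, hjw⟩ := hjC
      refine ⟨w, Finset.mem_sdiff.mpr ⟨hwC, fun hwW => hji ?_⟩, hjw⟩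
      exact eq_of_rootWord_prefix_of_rootWord_prefix (Finset.mem_Icc.mp hjN).1 hi hjw
        (Finset.mem_filter.mp hwW).2
    · intro w _ j hj k hk
      simp only [Set.mem_ofPred_eq, Finset.mem_erase, Finset.mem_filter,
        Finset.mem_Icc, used] at hj hk
      exact eq_of_rootWord_prefix_of_rootWord_prefix hj.1.2.1.1 hk.1.2.1.1 hj.2 hk.2
  have hW : W.card ≤ C.card := Finset.card_le_card (Finset.filter_subset _ _)
  have hCW : (C \ W).card = C.card - W.card := Finset.card_sdiff_of_subset (Finset.filter_subset _ _)
  have herase : used.card - 1 ≤ (used.erase i).card := Finset.pred_card_le_card_erase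
  omega

section SortedLengths

variable {α : Type*} [LinearOrder α]

lemma List.Pairwise.getElem_le_iff_lt_countP_s15 {L : List α} (hL : L.Pairwise (· ≤ ·)) {j : ℕ}
    (hj : j < L.length) (v : α) : L[j] ≤ v ↔ j < L.countP (· ≤ v) := by
  have hsplit : L = L.take j ++ L[j] :: L.drop (j + 1) := by
    rw [List.getElem_cons_drop, List.take_append_drop]
  have hL' := hsplit ▸ hL
  rw [List.pairwise_append, List.pairwise_cons] at hL'
  obtain ⟨-, ⟨hmid, -⟩, hleft⟩ := hL'
  have hcount := congrArg (List.countP (· ≤ v)) hsplit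
  rw [List.countP_append, List.countP_cons] at hcount
  have htake : (L.take j).length = j := List.length_take_of_le hj.le
  constructor
  · intro hv
    have : (L.take j).countP (· ≤ v) = j := (List.countP_eq_length.mpr
      fun a ha => decide_eq_true ((hleft a ha _ List.mem_cons_self).trans hv)).trans htake
    simp [hv] at hcount
    omega
  · intro hlt
    by_contra! hv
    have : (L.drop (j + 1)).countP (· ≤ v) = 0 := by
      rw [List.countP_eq_zero]
      exact fun a ha => by simpa using hv.trans_le (hmid a ha)
    have := (L.take j).countP_le_length (p := (· ≤ v))
    simp [hv.not_ge] at hcount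
    omega

lemma Multiset.countP_le_countP_of_rel_le {s t : Multiset α} (h : s.Rel (· ≤ ·) t) (v : α) :
    t.countP (· ≤ v) ≤ s.countP (· ≤ v) := by
  induction h with
  | zero => simp
  | cons hab _ ih =>
    rw [Multiset.countP_cons, Multiset.countP_cons]
    split_ifs with h₁ h₂ <;> first | omega | exact absurd (hab.trans h₁) h₂

lemma getD_sort_le_getD_sort_of_rel_le {s t : Multiset α} (h : s.Rel (· ≤ ·) t) (j : ℕ) (d : α) :
    (s.sort (· ≤ ·)).getD j d ≤ (t.sort (· ≤ ·)).getD j d := by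
  have hcard : (s.sort (· ≤ ·)).length = (t.sort (· ≤ ·)).length := by
    rw [Multiset.length_sort, Multiset.length_sort, Multiset.card_eq_card_of_rel h]
  by_cases hj : j < (t.sort (· ≤ ·)).length
  · rw [List.getD_eq_getElem _ _ (hcard ▸ hj), List.getD_eq_getElem _ _ hj,
      (Multiset.pairwise_sort s _).getElem_le_iff_lt_countP_s15]
    set v := (t.sort (· ≤ ·))[j]
    have hjt := ((Multiset.pairwise_sort t _).getElem_le_iff_lt_countP_s15 hj v).mp le_rfl
    rw [← Multiset.coe_countP, Multiset.sort_eq] at hjt ⊢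
    exact hjt.trans_le (Multiset.countP_le_countP_of_rel_le h v)
  · rw [List.getD_eq_default _ _ (by omega), List.getD_eq_default _ _ (by omega)]

end SortedLengths

lemma sum_range_nthLen {C : Finset (List Bool)} {n : ℕ} (hC : C.card = n) :
    ∑ j ∈ Finset.range n, nthLen C j = (C.val.map List.length).sum := by
  have hlen : (lenSeq C).length = n := by
    rw [lenSeq, Multiset.length_sort, Multiset.card_map, ← hC]; rfl
  calc ∑ j ∈ Finset.range n, nthLen C j = ∑ j : Fin (lenSeq C).length, (lenSeq C)[(j : ℕ)] := by
        rw [← hlen, Finset.sum_range]; simp [nthLen]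
    _ = (C.val.map List.length).sum := by
        rw [Fin.sum_univ_getElem, lenSeq, ← Multiset.sum_coe, Multiset.sort_eq]

lemma expLen_lt_of_rel_le {p : ℕ → ℝ} {n : ℕ} {C C' : Finset (List Bool)}
    (hp : ∀ j < n, 0 < p j) (hC : C.card = n) (hC' : C'.card = n)
    (hrel : (C'.val.map List.length).Rel (· ≤ ·) (C.val.map List.length))
    (hsum : (C'.val.map List.length).sum < (C.val.map List.length).sum) :
    expLen p n C' < expLen p n C := by
  have hle : ∀ j, nthLen C' j ≤ nthLen C j := fun j => getD_sort_le_getD_sort_of_rel_le hrel j 0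
  rw [← sum_range_nthLen hC, ← sum_range_nthLen hC'] at hsum
  obtain ⟨j, hj, hlt⟩ := Finset.exists_lt_of_sum_lt hsum
  refine Finset.sum_lt_sum (fun k hk => ?_) ⟨j, hj, ?_⟩
  · exact mul_le_mul_of_nonneg_left (by exact_mod_cast hle k) (hp k (Finset.mem_range.mp hk)).le
  · exact mul_lt_mul_of_pos_left (by exact_mod_cast hlt) (hp j (Finset.mem_range.mp hj))

lemma IsSFF.subset {C D : Finset (List Bool)} (hC : IsSFF C) (hDC : D ⊆ C) : IsSFF D :=
  ⟨fun w hw => hC.1 w (hDC hw), fun u hu w hw => hC.2 u (hDC hu) w (hDC hw)⟩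

lemma Multiset.rel_le_and_sum_lt_add_cons {β : Type*} [AddCommMonoid β] [PartialOrder β]
    [IsOrderedCancelAddMonoid β] {A s t : Multiset β} {a b : β} (hab : a < b)
    (hst : s.Rel (· ≤ ·) t) :
    (A + a ::ₘ s).Rel (· ≤ ·) (A + b ::ₘ t) ∧ (A + a ::ₘ s).sum < (A + b ::ₘ t).sum := by
  refine ⟨(Multiset.rel_refl_of_refl_on fun _ _ => le_rfl).add (hst.cons hab.le), ?_⟩
  simp only [Multiset.sum_add, Multiset.sum_cons]
  exact add_lt_add_right (add_lt_add_of_lt_of_le hab (Multiset.sum_le_sum_of_rel_le hst)) _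

lemma rel_le_and_sum_lt_map_length_sdiff_add_insert {C W : Finset (List Bool)} {X : Finset ℕ}
    {i : ℕ} {w₀ : List Bool} (hWC : W ⊆ C) (hw₀ : w₀ ∈ W) (hw₀len : i < w₀.length)
    (hlong : ∀ w ∈ W.erase w₀, 2 * i ≤ w.length) (hiX : i ∉ X) (hX : ∀ j ∈ X, j ≤ 2 * i)
    (hXcard : X.card = W.card - 1) :
    ((C \ W).val.map List.length + (insert i X).val).Rel (· ≤ ·) (C.val.map List.length) ∧
      ((C \ W).val.map List.length + (insert i X).val).sum < (C.val.map List.length).sum := by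
  have hCsplit : C.val.map List.length =
      (C \ W).val.map List.length + (w₀.length ::ₘ (W.erase w₀).val.map List.length) := by
    rw [Finset.erase_val, ← Multiset.map_cons, Multiset.cons_erase hw₀, ← Multiset.map_add,
      ← Finset.disjUnion_val _ _ Finset.sdiff_disjoint, Finset.disjUnion_eq_union,
      Finset.sdiff_union_of_subset hWC]
  have hrest : X.val.Rel (· ≤ ·) ((W.erase w₀).val.map List.length) := by
    refine Multiset.rel_of_forall (fun a b ha hb => (hX a ha).trans ?_) ?_
    · obtain ⟨v, hv, rfl⟩ := Multiset.mem_map.mp hb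
      exact hlong v hv
    · rw [Multiset.card_map, ← Finset.card_def, ← Finset.card_def, hXcard,
        Finset.card_erase_of_mem hw₀]
  rw [hCsplit, Finset.insert_val_of_notMem hiX]
  exact Multiset.rel_le_and_sum_lt_add_cons hw₀len hrest

lemma IsSFF.nil_notMem {C : Finset (List Bool)} (hC : IsSFF C) {w : List Bool} (hwC : w ∈ C)
    (hw : w ≠ []) : [] ∉ C :=
  fun h => hw (hC.2 [] h w hwC List.nil_prefix).symm

lemma exists_shorter_code_of_rootWord_prefix {C : Finset (List Bool)} {i : ℕ} (hC : IsSFF C)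
    (hone : [true] ∉ C) (hi : 1 ≤ i) (hcard : C.card ≤ 2 * i) {w : List Bool} (hwC : w ∈ C)
    (hpre : rootWord i <+: w) (hne : rootWord i ≠ w) :
    ∃ C' : Finset (List Bool), IsSFF C' ∧ C'.card = C.card ∧
      (C'.val.map List.length).Rel (· ≤ ·) (C.val.map List.length) ∧
      (C'.val.map List.length).sum < (C.val.map List.length).sum := by
  set W := C.filter (rootWord i <+: ·)
  have hext : ∀ v ∈ W, Palin v ∧ rootWord i <+: v ∧ rootWord i ≠ v := by
    intro v hv
    obtain ⟨hvC, hvpre⟩ := Finset.mem_filter.mp hv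
    refine ⟨hC.1 v hvC, hvpre, fun h => hne (hC.2 _ ?_ w hwC hpre)⟩
    rwa [h]
  obtain ⟨w₀, hw₀, hlong⟩ :=
    exists_forall_two_mul_le_length hi hext ⟨w, Finset.mem_filter.mpr ⟨hwC, hpre⟩⟩
  have hw₀len : i < w₀.length := by
    have := (hext w₀ hw₀).2.1.length_lt_of_ne_s15 (hext w₀ hw₀).2.2
    rwa [length_rootWord_s15 hi] at this
  obtain ⟨X, hXfree, hXcard⟩ : ∃ X ⊆ freeRootIndices C (2 * i), X.card = W.card - 1 :=
    have hfew : W.card ≤ (freeRootIndices C (2 * i)).card + 1 :=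
      card_filter_rootWord_prefix_le hi hcard
    Finset.exists_subset_card_eq (by omega)
  have hX : ∀ j ∈ X, (1 ≤ j ∧ j ≤ 2 * i) ∧ ∀ v ∈ C, ¬ rootWord j <+: v := fun j hj => by
    simpa [freeRootIndices] using hXfree hj
  have hiX : i ∉ X := fun hiX => (hX i hiX).2 w hwC hpre
  have hJ : ∀ j ∈ insert i X, 1 ≤ j := by
    simpa using ⟨hi, fun j hj => (hX j hj).1.1⟩
  have hfree : ∀ j ∈ insert i X, ∀ v ∈ C \ W, ¬ rootWord j <+: v := by
    intro j hj v hv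
    obtain ⟨hvC, hvW⟩ := Finset.mem_sdiff.mp hv
    rcases Finset.mem_insert.mp hj with rfl | hj
    · exact fun h => hvW (Finset.mem_filter.mpr ⟨hvC, h⟩)
    · exact (hX j hj).2 v hvC
  have hw : w ≠ [] := by
    rintro rfl
    exact hne (List.prefix_nil.mp hpre)
  have hnil : [] ∉ C \ W := fun h => hC.nil_notMem hwC hw (Finset.mem_sdiff.mp h).1
  obtain ⟨hrel, hsum⟩ := rel_le_and_sum_lt_map_length_sdiff_add_insert (Finset.filter_subset _ _)
    hw₀ hw₀len hlong hiX (fun j hj => (hX j hj).1.2) hXcard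
  rw [← map_length_union_image_rootWord hJ hfree] at hrel hsum
  refine ⟨_, isSFF_union_image_rootWord (hC.subset Finset.sdiff_subset) hnil
    (fun h => hone (Finset.mem_sdiff.mp h).1) hJ hfree, ?_, hrel, hsum⟩
  simpa only [Multiset.card_map, ← Finset.card_def] using Multiset.card_eq_card_of_rel hrel

theorem root_word_not_prefix_general (n : ℕ) (C : Finset (List Bool)) (hC : InOpt n C)
    (i : ℕ) (hi1 : 1 ≤ i) (h2i : n ≤ 2 * i) :
    rootWord i ∉ prefixSet C := by
  rintro ⟨-, -, w, hwC, hpre, hne⟩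
  obtain ⟨⟨hSFF, hcard, p, hp, hopt⟩, hone⟩ := hC
  obtain ⟨C', hC'SFF, hC'card, hrel, hsum⟩ :=
    exists_shorter_code_of_rootWord_prefix hSFF hone hi1 (hcard ▸ h2i) hwC hpre hne
  rw [hcard] at hC'card
  exact (hopt C' hC'SFF hC'card).not_gt (expLen_lt_of_rel_le hp.2.1 hcard hC'card hrel hsum)

/-- If `C ∈ O_n`, then for every index `i` with `1 ≤ i ≤ n` and
`2i ≥ n`, the root codeword `s_i` is not in `C^prefix`, i.e. `s_i` is not a
proper prefix of any codeword of `C`. -/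
theorem root_word_not_prefix (n : ℕ) (C : Finset (List Bool)) (hC : InOpt n C)
    (i : ℕ) (hi1 : 1 ≤ i) (hin : i ≤ n) (h2i : n ≤ 2 * i) :
    rootWord i ∉ prefixSet C :=
  root_word_not_prefix_general n C hC i hi1 h2i
end
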